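/- Let n, m ≥ 1 be integers and let S be a digitally convex set of K_n □ K_m. If there exists a function f from the vertices of K_n to the vertices of K_m such that (i, f(i)) ∈ S for every vertex i of K_n, then S is the entire vertex set of K_n □ K_m. -/
import Mathlib


open SimpleGraph

/-- `N[S]`: the union of closed neighbourhoods of the vertices of `S`. -/
def closedNbhd {V : Type*} (G : SimpleGraph V) (S : Set V) : Set V :=
  ⋃ v ∈ S, insert v (G.neighborSet v)

/-- A set `S` is digitally convex in `G` if every vertex `v` with `N[v] ⊆ N[S]`
belongs to `S`. -/
def DigConvex {V : Type*} (G : SimpleGraph V) (S : Set V) : Prop :=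
  ∀ v : V, insert v (G.neighborSet v) ⊆ closedNbhd G S → v ∈ S

/-- `n_D(G)`: the number of digitally convex sets of `G`. -/
noncomputable def nD {V : Type*} (G : SimpleGraph V) : ℕ :=
  Nat.card {S : Set V // DigConvex G S}

/-- If a digitally convex set `S` of `K_n □ K_m` contains `(i, f i)` for every
vertex `i` of `K_n` (for some function `f`), then `S` is the whole vertex set. -/
theorem digConvex_complete_boxProd_transversal (n m : ℕ) (hn : 1 ≤ n) (hm : 1 ≤ m)
    (S : Set (Fin n × Fin m))
    (hS : DigConvex ((⊤ : SimpleGraph (Fin n)) □ (⊤ : SimpleGraph (Fin m))) S)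
    (f : Fin n → Fin m) (hf : ∀ i : Fin n, (i, f i) ∈ S) :
    S = Set.univ := by
  set G := ((⊤ : SimpleGraph (Fin n)) □ (⊤ : SimpleGraph (Fin m)))
  have hcov : closedNbhd G S = Set.univ := by
    ext ⟨c, d⟩
    simp only [Set.mem_univ, iff_true, closedNbhd, Set.mem_iUnion]
    refine ⟨(c, f c), hf c, ?_⟩
    by_cases h : d = f c
    · subst h; exact Set.mem_insert _ _
    · refine Set.mem_insert_of_mem _ ?_
      show G.Adj (c, f c) (c, d)
      exact SimpleGraph.boxProd_adj.2 (Or.inr ⟨by simp [Ne.symm h], rfl⟩)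
  ext v
  simp only [Set.mem_univ, iff_true]
  exact hS v (by rw [hcov]; exact Set.subset_univ _)
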